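/- The function Fₙ(z₁,z₂) = Σ_{k=0}^{n-1} aₖ z₂ᵏ z₁^{n-1-k} on SU(1,1) satisfies 2iX₀Fₙ = (1-n)Fₙ and X₊Fₙ = 0, and consequently the spinor Ψ = (Fₙ, 0)ᵗ solves the minimally coupled Dirac equation D_{SU(1,1),A}Ψ = 0 with gauge potential A = -((2n+1)/4)σ⁰. -/

import Mathlib

open Complex

noncomputable def d1 (F : ℂ × ℂ → ℂ) (p : ℂ × ℂ) : ℂ :=
  (fderiv ℝ F p (1, 0) - Complex.I * fderiv ℝ F p (Complex.I, 0)) / 2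

noncomputable def d1bar (F : ℂ × ℂ → ℂ) (p : ℂ × ℂ) : ℂ :=
  (fderiv ℝ F p (1, 0) + Complex.I * fderiv ℝ F p (Complex.I, 0)) / 2

noncomputable def d2 (F : ℂ × ℂ → ℂ) (p : ℂ × ℂ) : ℂ :=
  (fderiv ℝ F p (0, 1) - Complex.I * fderiv ℝ F p (0, Complex.I)) / 2

noncomputable def d2bar (F : ℂ × ℂ → ℂ) (p : ℂ × ℂ) : ℂ :=
  (fderiv ℝ F p (0, 1) + Complex.I * fderiv ℝ F p (0, Complex.I)) / 2

noncomputable def X0op (F : ℂ × ℂ → ℂ) (p : ℂ × ℂ) : ℂ :=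
  (Complex.I / 2) * (p.2 * d2 F p + p.1 * d1 F p -
    (starRingEnd ℂ) p.2 * d2bar F p - (starRingEnd ℂ) p.1 * d1bar F p)

noncomputable def Xplusop (F : ℂ × ℂ → ℂ) (p : ℂ × ℂ) : ℂ :=
  Complex.I * (p.1 * d2bar F p + p.2 * d1bar F p)

/-- Fₙ(z₁,z₂) = Σ_{k=0}^{n-1} aₖ z₂ᵏ z₁^{n-1-k}. -/
noncomputable def Fhom (n : ℕ) (a : ℕ → ℂ) (p : ℂ × ℂ) : ℂ :=
  ∑ k ∈ Finset.range n, a k * p.2 ^ k * p.1 ^ (n - 1 - k)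

private lemma pow_aux (j : ℕ) (z : ℂ) : (j : ℂ) * z ^ (j - 1) * z = (j : ℂ) * z ^ j := by
  cases j with
  | zero => simp
  | succ i => simp [pow_succ]; ring

/-- The homogeneous function Fₙ satisfies 2iX₀Fₙ = (1-n)Fₙ and X₊Fₙ = 0 on SU(1,1);
consequently the spinor Ψ = (Fₙ, 0)ᵗ solves the Dirac equation on SU(1,1) minimally
coupled to A = -((2n+1)/4)σ⁰, whose two spinor components read
(2i/ℓ)(X₀ + iA₀)Fₙ - (3/(2ℓ))Fₙ = 0 and (2i/ℓ)(X₊ + iA₊)Fₙ = 0, with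
A₀ = A(X₀) = -(2n+1)/4 and A₊ = A(X₊) = 0. -/
theorem homogeneous_magnetic_modes
    (n : ℕ) (a : ℕ → ℂ) (ℓ : ℝ) (hℓ : 0 < ℓ) :
    ∀ p : ℂ × ℂ, Complex.normSq p.1 - Complex.normSq p.2 = 1 →
      2 * Complex.I * X0op (Fhom n a) p = ((1 : ℂ) - (n : ℂ)) * Fhom n a p ∧
      Xplusop (Fhom n a) p = 0 ∧
      (2 * Complex.I / (ℓ : ℂ)) *
          (X0op (Fhom n a) p + Complex.I * (-(2 * (n : ℂ) + 1) / 4) * Fhom n a p) -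
          (3 / (2 * (ℓ : ℂ))) * Fhom n a p = 0 ∧
      (2 * Complex.I / (ℓ : ℂ)) * (Xplusop (Fhom n a) p + Complex.I * 0 * Fhom n a p) = 0 := by
  intro p _
  set L : (ℂ × ℂ) →L[ℂ] ℂ := ∑ k ∈ Finset.range n,
      ((a k * p.2 ^ k) •
          ((((n - 1 - k : ℕ) : ℂ) * p.1 ^ (n - 1 - k - 1)) • ContinuousLinearMap.fst ℂ ℂ ℂ) +
        p.1 ^ (n - 1 - k) •
          a k • ((((k : ℕ) : ℂ) * p.2 ^ (k - 1)) • ContinuousLinearMap.snd ℂ ℂ ℂ)) with hLdef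
  have H : HasFDerivAt (Fhom n a) L p := by
    unfold Fhom
    rw [hLdef]
    apply HasFDerivAt.fun_sum
    intro k _
    have h1 : HasFDerivAt (fun q : ℂ × ℂ => q.1 ^ (n - 1 - k))
        ((((n - 1 - k : ℕ) : ℂ) * p.1 ^ (n - 1 - k - 1)) • ContinuousLinearMap.fst ℂ ℂ ℂ) p :=
      (hasDerivAt_pow (n - 1 - k) p.1).comp_hasFDerivAt p hasFDerivAt_fst
    have h2 : HasFDerivAt (fun q : ℂ × ℂ => q.2 ^ k)
        ((((k : ℕ) : ℂ) * p.2 ^ (k - 1)) • ContinuousLinearMap.snd ℂ ℂ ℂ) p :=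
      (hasDerivAt_pow k p.2).comp_hasFDerivAt p hasFDerivAt_snd
    exact (h2.const_mul (a k)).mul h1
  have hfder : ∀ v : ℂ × ℂ, fderiv ℝ (Fhom n a) p v = L v := by
    intro v
    rw [(H.restrictScalars ℝ).fderiv]
    rfl
  have hI1 : L (Complex.I, 0) = Complex.I * L (1, 0) := by
    have hv : ((Complex.I, (0 : ℂ)) : ℂ × ℂ) = Complex.I • ((1 : ℂ), (0 : ℂ)) := by
      simp [Prod.ext_iff]
    rw [hv, map_smul, smul_eq_mul]
  have hI2 : L (0, Complex.I) = Complex.I * L (0, 1) := by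
    have hv : (((0 : ℂ), Complex.I) : ℂ × ℂ) = Complex.I • ((0 : ℂ), (1 : ℂ)) := by
      simp [Prod.ext_iff]
    rw [hv, map_smul, smul_eq_mul]
  have key1 : ∀ z : ℂ, (z - Complex.I * (Complex.I * z)) / 2 = z := by
    intro z; rw [← mul_assoc, Complex.I_mul_I]; ring
  have key2 : ∀ z : ℂ, (z + Complex.I * (Complex.I * z)) / 2 = 0 := by
    intro z; rw [← mul_assoc, Complex.I_mul_I]; ring
  have hd1 : d1 (Fhom n a) p = L (1, 0) := by
    unfold d1; rw [hfder, hfder, hI1, key1]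
  have hd2 : d2 (Fhom n a) p = L (0, 1) := by
    unfold d2; rw [hfder, hfder, hI2, key1]
  have hd1bar : d1bar (Fhom n a) p = 0 := by
    unfold d1bar; rw [hfder, hfder, hI1, key2]
  have hd2bar : d2bar (Fhom n a) p = 0 := by
    unfold d2bar; rw [hfder, hfder, hI2, key2]
  have hEuler : p.2 * L (0, 1) + p.1 * L (1, 0) = ((n : ℂ) - 1) * Fhom n a p := by
    rw [hLdef]
    unfold Fhom
    simp only [ContinuousLinearMap.sum_apply, ContinuousLinearMap.add_apply,
      ContinuousLinearMap.smul_apply, ContinuousLinearMap.coe_fst', ContinuousLinearMap.coe_snd',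
      smul_eq_mul, mul_one, mul_zero, zero_add, add_zero, Finset.mul_sum]
    rw [← Finset.sum_add_distrib]
    apply Finset.sum_congr rfl
    intro k hk
    have hkn : k < n := Finset.mem_range.mp hk
    have h1n : 1 ≤ n := by omega
    have hm : (k : ℂ) + ((n - 1 - k : ℕ) : ℂ) = (n : ℂ) - 1 := by
      have hh : k + (n - 1 - k) = n - 1 := by omega
      rw [← Nat.cast_add, hh, Nat.cast_sub h1n, Nat.cast_one]
    linear_combination (a k * p.1 ^ (n - 1 - k)) * pow_aux k p.2 +
      (a k * p.2 ^ k) * pow_aux (n - 1 - k) p.1 +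
      (a k * p.2 ^ k * p.1 ^ (n - 1 - k)) * hm
  have hX0 : X0op (Fhom n a) p = Complex.I / 2 * (((n : ℂ) - 1) * Fhom n a p) := by
    unfold X0op
    rw [hd1, hd2, hd1bar, hd2bar, mul_zero, mul_zero, sub_zero, sub_zero, hEuler]
  have hXp : Xplusop (Fhom n a) p = 0 := by
    unfold Xplusop
    rw [hd1bar, hd2bar]; ring
  refine ⟨?_, hXp, ?_, ?_⟩
  · rw [hX0]
    linear_combination (((n : ℂ) - 1) * Fhom n a p) * Complex.I_sq
  · rw [hX0]
    linear_combination (-3 / (2 * (ℓ : ℂ)) * Fhom n a p) * Complex.I_sq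
  · rw [hXp]; ring
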